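/- If an inverse semigroup T (with G̃^R ⊆ T ⊆ P*(G) ⋊ G) admits a meet-preserving semigroup homomorphism θ*: T → S extending the unital premorphism θ: G → S, then E(S) is (Supp(T),θ)-meet complete, and θ*(A,1) = ⋀_{a∈A} θ(a)θ(a)⁻¹ for every A ∈ Supp(T). -/

import Mathlib

/-!
The idempotents `({1,a},1) = ({1,a},a)({1,a⁻¹},a⁻¹)` of `T` are sent by `θ*` to `θ(a)θ(a)⁻¹`,
and in `P*(G) ⋊ G` their meet is `(A ∪ {1}, 1) = ({1,1},1)(A,1)`, which `θ*` sends to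
`θ(1)θ*(A,1) = θ*(A,1)`. Since `θ*` preserves meets, `θ*(A,1)` is the meet of the `θ(a)θ(a)⁻¹`.
-/

variable {G : Type*} [Group G]

/-- `P*(G)`: the nonempty subsets of `G` (a semilattice under union). -/
abbrev PStar (G : Type*) [Group G] := {A : Set G // A.Nonempty}

/-- The semidirect product `P*(G) ⋊ G` (as a set: `P*(G) × G`). -/
abbrev SD (G : Type*) [Group G] := PStar G × G

/-- Multiplication `(A,g)(B,h) = (A ∪ gB, gh)` in `P*(G) ⋊ G`. -/
def sdMul (x y : SD G) : SD G :=
  (⟨x.1.1 ∪ (fun a => x.2 * a) '' y.1.1, x.1.2.inl⟩, x.2 * y.2)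

/-- The inverse `(g⁻¹A, g⁻¹)` of `(A,g)` in `P*(G) ⋊ G`. -/
def sdInv (x : SD G) : SD G :=
  (⟨(fun a => x.2⁻¹ * a) '' x.1.1, x.1.2.image _⟩, x.2⁻¹)

/-- The Birget–Rhodes expansion `G̃^R` sitting inside `P*(G) ⋊ G`:
pairs `(A,g)` with `A` finite and `{1,g} ⊆ A`. -/
def BRset (G : Type*) [Group G] : Set (SD G) :=
  {x | x.1.1.Finite ∧ (1 : G) ∈ x.1.1 ∧ x.2 ∈ x.1.1}

/-- The element `({1,g}, g)` of `G̃^R`. -/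
def iotaBR (g : G) : SD G := (⟨{1, g}, ⟨1, Or.inl rfl⟩⟩, g)

/-- The support of a subset `T` of `P*(G) ⋊ G`. -/
def Supp (T : Set (SD G)) : Set (PStar G) := {A | ∃ g : G, (A, g) ∈ T}

/-- An inverse monoid. -/
class InverseMonoid (S : Type*) extends Monoid S, Inv S where
  mul_inv_mul : ∀ a : S, a * a⁻¹ * a = a
  inv_mul_inv : ∀ a : S, a⁻¹ * a * a⁻¹ = a⁻¹
  inv_unique : ∀ a b : S, a * b * a = a → b * a * b = b → b = a⁻¹

/-- A unital premorphism from a group to an inverse monoid. -/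
def IsUnitalPremorphism {G S : Type*} [Group G] [InverseMonoid S] (θ : G → S) : Prop :=
  θ 1 = 1 ∧ (∀ g : G, θ g⁻¹ = (θ g)⁻¹) ∧
    ∀ g h : G, θ g⁻¹ * θ g * θ h = θ g⁻¹ * θ (g * h)

/-- The natural partial order on an inverse monoid: `s ≤ t` iff `s = e * t`
for some idempotent `e`. -/
def natLe {S : Type*} [InverseMonoid S] (s t : S) : Prop :=
  ∃ e : S, e * e = e ∧ s = e * t

/-- `m` is the meet (greatest lower bound) of `X` with respect to the
natural partial order. -/
def IsMeet {S : Type*} [InverseMonoid S] (X : Set S) (m : S) : Prop :=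
  (∀ x ∈ X, natLe m x) ∧ ∀ b : S, (∀ x ∈ X, natLe b x) → natLe b m

/-- The family `{θ(a)θ(a)⁻¹ : a ∈ A}` of idempotents. -/
def thFam {G S : Type*} [Group G] [InverseMonoid S] (θ : G → S) (A : Set G) : Set S :=
  (fun a => θ a * (θ a)⁻¹) '' A

/-- The natural partial order on `P*(G) ⋊ G`. -/
def sdLe {G : Type*} [Group G] (x y : SD G) : Prop :=
  ∃ e : SD G, sdMul e e = e ∧ x = sdMul e y

def PStar.insertOne (A : PStar G) : PStar G := ⟨insert 1 A.1, ⟨1, Set.mem_insert _ _⟩⟩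

lemma iotaBR_mem_BRset (a : G) : iotaBR a ∈ BRset G :=
  ⟨(Set.finite_singleton a).insert 1, Or.inl rfl, Or.inr rfl⟩

lemma sdMul_sdInv_self (x : SD G) : sdMul x (sdInv x) = (x.1, 1) := by
  refine Prod.ext (Subtype.ext ?_) (mul_inv_cancel x.2)
  show x.1.1 ∪ (fun a => x.2 * a) '' ((fun a => x.2⁻¹ * a) '' x.1.1) = x.1.1
  simp only [Set.image_image, mul_inv_cancel_left, Set.image_id', Set.union_self]

lemma iotaBR_mul_iotaBR_inv (a : G) : sdMul (iotaBR a) (iotaBR a⁻¹) = ((iotaBR a).1, 1) := by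
  refine Prod.ext (Subtype.ext ?_) (mul_inv_cancel a)
  ext x
  simp [sdMul, iotaBR, inv_mul_eq_one]
  tauto

lemma iotaBR_one_mul (A : PStar G) : sdMul (iotaBR 1) (A, 1) = (A.insertOne, 1) := by
  refine Prod.ext (Subtype.ext ?_) (one_mul 1)
  ext x
  simp [sdMul, iotaBR, PStar.insertOne]

lemma sdMul_self_eq_self_iff (e : SD G) : sdMul e e = e ↔ e.2 = 1 := by
  constructor
  · intro he
    exact mul_eq_left.mp (congrArg Prod.snd he)
  · intro he
    refine Prod.ext (Subtype.ext ?_) (by simp [sdMul, he])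
    simp [sdMul, he]

lemma sdLe_snd_one_iff (x : SD G) (B : PStar G) :
    sdLe x (B, 1) ↔ x.2 = 1 ∧ B.1 ⊆ x.1.1 := by
  constructor
  · rintro ⟨e, he, rfl⟩
    rw [sdMul_self_eq_self_iff] at he
    refine ⟨by simp [sdMul, he], fun b hb => Or.inr ⟨b, hb, by simp [he]⟩⟩
  · rintro ⟨hx, hB⟩
    refine ⟨x, (sdMul_self_eq_self_iff x).mpr hx, Prod.ext (Subtype.ext ?_) (by simp [sdMul, hx])⟩
    simp [sdMul, hx, Set.union_eq_self_of_subset_right hB]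

lemma insertOne_isGLB_iotaBR_fst (A : PStar G) :
    (∀ x ∈ (fun a => ((iotaBR a).1, (1 : G))) '' A.1, sdLe (A.insertOne, 1) x) ∧
      ∀ b : SD G, (∀ x ∈ (fun a => ((iotaBR a).1, (1 : G))) '' A.1, sdLe b x) →
        sdLe b (A.insertOne, 1) := by
  simp only [Set.forall_mem_image, sdLe_snd_one_iff]
  refine ⟨fun a ha => ⟨trivial, ?_⟩, fun b hb => ⟨?_, ?_⟩⟩
  · rintro x (rfl | rfl)
    exacts [Set.mem_insert _ _, Set.mem_insert_of_mem _ ha]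
  · obtain ⟨a, ha⟩ := A.2
    exact (hb ha).1
  · rintro x (rfl | hx)
    · obtain ⟨a, ha⟩ := A.2
      exact (hb ha).2 (Or.inl rfl)
    · exact (hb hx).2 (Or.inr rfl)

/-- if an inverse intermediate extension `T` of `G̃^R` admits a
meet-preserving semigroup homomorphism `θ* : T → S` extending the unital
premorphism `θ`, then `E(S)` is `(Supp T, θ)`-meet complete, and for every
`A ∈ Supp T` the meet of `{θ(a)θ(a)⁻¹ : a ∈ A}` is `θ*(A,1)`. -/
theorem stmt9 {G S : Type*} [Group G] [InverseMonoid S] (θ : G → S)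
    (hθ : IsUnitalPremorphism θ)
    (T : Set (SD G))
    (hmul : ∀ x ∈ T, ∀ y ∈ T, sdMul x y ∈ T)
    (hinv : ∀ x ∈ T, sdInv x ∈ T)
    (hBR : BRset G ⊆ T)
    (θstar : SD G → S)
    (hhom : ∀ x ∈ T, ∀ y ∈ T, θstar (sdMul x y) = θstar x * θstar y)
    (hext : ∀ g : G, θstar (iotaBR g) = θ g)
    (hmp : ∀ X ⊆ T, ∀ m ∈ T,
      ((∀ x ∈ X, sdLe m x) ∧ ∀ b ∈ T, (∀ x ∈ X, sdLe b x) → sdLe b m) →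
      IsMeet (θstar '' X) (θstar m)) :
    ∀ A : PStar G, A ∈ Supp T → IsMeet (thFam θ A.1) (θstar (A, (1 : G))) := by
  obtain ⟨hθ1, hθinv, -⟩ := hθ
  rintro A ⟨g, hAg⟩
  have hι : ∀ a, iotaBR a ∈ T := fun a => hBR (iotaBR_mem_BRset a)
  have hA : ((A, 1) : SD G) ∈ T := sdMul_sdInv_self (A, g) ▸ hmul _ hAg _ (hinv _ hAg)
  have hidem : ∀ a, ((iotaBR a).1, (1 : G)) ∈ T :=
    fun a => iotaBR_mul_iotaBR_inv a ▸ hmul _ (hι a) _ (hι a⁻¹)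
  have hθidem : ∀ a, θstar ((iotaBR a).1, 1) = θ a * (θ a)⁻¹ := fun a => by
    rw [← iotaBR_mul_iotaBR_inv, hhom _ (hι a) _ (hι a⁻¹), hext, hext, hθinv]
  have hθA : θstar (A.insertOne, 1) = θstar (A, 1) := by
    rw [← iotaBR_one_mul, hhom _ (hι 1) _ hA, hext, hθ1, one_mul]
  have hmeet := hmp _ (Set.image_subset_iff.mpr fun a _ => hidem a) _
    (iotaBR_one_mul A ▸ hmul _ (hι 1) _ hA)
    ⟨(insertOne_isGLB_iotaBR_fst A).1, fun b _ => (insertOne_isGLB_iotaBR_fst A).2 b⟩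
  rwa [Set.image_image, Set.image_congr fun a _ => hθidem a, hθA] at hmeet
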